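/- Let (R,m,k) be a commutative Noetherian local ring which is not a field. Then the following conditions are equivalent: (i) k is a direct summand of Ω²(M) for every non-free finitely generated R-module M; (ii) k is a direct summand of Ω³(M) for every non-free finitely generated R-module M; (iii) k is a direct summand of the R-module m = Ω¹(k); (iv) soc(R) is not contained in m². -/

import Mathlib

open IsLocalRing

universe u

/-- `k = R/m` is a direct summand of the `R`-module `M`, i.e. `M ≅ k ⊕ N` for some `N`. -/
def ResidueFieldIsSummand (R : Type u) [CommRing R] [IsLocalRing R]
    (M : Type u) [AddCommGroup M] [Module R M] : Prop :=
  ∃ p q : Submodule R M, IsCompl p q ∧ Nonempty (p ≃ₗ[R] ResidueField R)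

/-- `π : F → M` is a minimal free cover: `F` is finitely generated free, `π` is
surjective, and `ker π ⊆ m·F`. -/
def IsMinimalFreeCover (R : Type u) [CommRing R] [IsLocalRing R]
    {F M : Type u} [AddCommGroup F] [Module R F] [AddCommGroup M] [Module R M]
    (π : F →ₗ[R] M) : Prop :=
  Module.Free R F ∧ Module.Finite R F ∧ Function.Surjective π ∧
    LinearMap.ker π ≤ (maximalIdeal R) • (⊤ : Submodule R F)

/-- `IsSyzygy R n M N` means that `N` is (isomorphic to) an `n`-th syzygy `Ωⁿ(M)` of `M`,
computed from minimal free covers. -/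
def IsSyzygy (R : Type u) [CommRing R] [IsLocalRing R] :
    ℕ → ModuleCat.{u} R → ModuleCat.{u} R → Prop
  | 0, M, N => Nonempty (N ≃ₗ[R] M)
  | n + 1, M, N => ∃ (F : ModuleCat.{u} R) (π : F →ₗ[R] M),
      IsMinimalFreeCover R π ∧ IsSyzygy R n (ModuleCat.of R (LinearMap.ker π)) N

/-!
The residue field `k` is a direct summand of `X` exactly when some socle element of `X` lies
outside `𝔪 X`. If `x ∈ soc R \ 𝔪²`, then `x` kills every syzygy `K ⊆ 𝔪 F`, and for a minimal free
cover `G → K` of `K ≠ 0` the element `x • e`, `e` a basis vector of `G`, is a socle element of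
`Ω¹ K` outside `𝔪 Ω¹ K ⊆ 𝔪² G`. This gives (iv) ⇒ (i), and (iv) ⇒ (ii) because `Ω² M ≠ 0` already
has `k` as a summand. Conversely, if `soc R ⊆ 𝔪²`, the first syzygy of a module killed by `𝔪` is
`𝔪 F`, whose socle lies in `𝔪² F = 𝔪 (𝔪 F)`; when `soc R ≠ 0` such syzygies occur as
`Ω²(R ⧸ soc R)` and `Ω³(Rⁿ ⧸ R a)` with `a` generating `𝔪`, and when `soc R = 0` no submodule of a
free module has `k` as a summand, so `M = k` works. Finally (iii) ⇔ (iv) is the criterion for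
`X = 𝔪`.
-/

open Submodule

theorem Module.Basis.mem_ideal_smul_top_iff {R F ι : Type*} [CommRing R] [AddCommGroup F]
    [Module R F] (b : Module.Basis ι R F) {I : Ideal R} {y : F} :
    y ∈ I • (⊤ : Submodule R F) ↔ ∀ i, b.repr y i ∈ I := by
  refine ⟨fun hy i => ?_, fun h => ?_⟩
  · induction hy using Submodule.smul_induction_on' with
    | smul a ha n _ => simpa using I.mul_mem_right _ ha
    | add u _ v _ hu hv => simpa using add_mem hu hv
  · rw [← b.linearCombination_repr y, Finsupp.linearCombination_apply]
    exact sum_mem fun i _ => smul_mem_smul (h i) mem_top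

theorem Submodule.coe_mem_torsionBySet_iff {R X : Type*} [CommRing R] [AddCommGroup X]
    [Module R X] {s : Set R} {L : Submodule R X} {z : L} :
    (z : X) ∈ torsionBySet R X s ↔ z ∈ torsionBySet R L s := by
  simp only [mem_torsionBySet_iff]
  exact forall_congr' fun a => by rw [← coe_smul_of_tower, ZeroMemClass.coe_eq_zero]

theorem Module.Basis.repr_mem_torsionBySet {R F ι : Type*} [CommRing R] [AddCommGroup F]
    [Module R F] (b : Module.Basis ι R F) {s : Set R} {y : F} (hy : y ∈ torsionBySet R F s)
    (i : ι) : b.repr y i ∈ torsionBySet R R s := by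
  rw [mem_torsionBySet_iff] at hy ⊢
  intro a
  simpa using congrArg (fun v => b.repr v i) (hy a)

theorem smul_eq_zero_of_mem_torsionBySet_of_mem_smul {R X : Type*} [CommRing R] [AddCommGroup X]
    [Module R X] {I : Ideal R} {x : R} (hx : x ∈ torsionBySet R R (I : Set R))
    {N : Submodule R X} {y : X} (hy : y ∈ I • N) : x • y = 0 := by
  induction hy using Submodule.smul_induction_on' with
  | smul a ha n _ =>
    rw [smul_smul, mul_comm, ← smul_eq_mul, (mem_torsionBySet_iff _ _).mp hx ⟨a, ha⟩, zero_smul]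
  | add u _ v _ hu hv => rw [smul_add, hu, hv, add_zero]

theorem LinearMap.ker_toSpanSingleton_pi {R ι : Type*} [CommRing R] (a : ι → R) :
    LinearMap.ker (LinearMap.toSpanSingleton R (ι → R) a) =
      torsionBySet R R (Ideal.span (Set.range a) : Set R) := by
  ext r
  rw [← torsionBySet_eq_torsionBySet_span, mem_torsionBySet_iff]
  simp [funext_iff, mul_comm]

section LocalRing

variable {R : Type u} [CommRing R] [IsLocalRing R]

local notation "𝔪" => maximalIdeal R
local notation "soc" => torsionBySet R R (𝔪 : Set R)

section ResidueFieldSummand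

variable {X Y : Type u} [AddCommGroup X] [Module R X] [AddCommGroup Y] [Module R Y]

theorem linearMap_residueField_eq_zero_of_mem_smul_top (g : X →ₗ[R] ResidueField R) {y : X}
    (hy : y ∈ 𝔪 • (⊤ : Submodule R X)) : g y = 0 := by
  induction hy using Submodule.smul_induction_on' with
  | smul a ha n _ =>
    rw [map_smul, Algebra.smul_def, ResidueField.algebraMap_eq,
      (residue_eq_zero_iff a).mpr ha, zero_mul]
  | add u _ v _ hu hv => rw [map_add, hu, hv, add_zero]

theorem exists_linearMap_residueField_eq_one_iff {z : X} :
    (∃ g : X →ₗ[R] ResidueField R, g z = 1) ↔ z ∉ 𝔪 • (⊤ : Submodule R X) := by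
  refine ⟨fun ⟨g, hg⟩ hz => by simp [linearMap_residueField_eq_zero_of_mem_smul_top g hz] at hg,
    fun hz => ?_⟩
  let : Module (ResidueField R) (X ⧸ (𝔪 • ⊤ : Submodule R X)) :=
    inferInstanceAs (Module (R ⧸ 𝔪) (X ⧸ (𝔪 • ⊤ : Submodule R X)))
  have : IsScalarTower R (ResidueField R) (X ⧸ (𝔪 • ⊤ : Submodule R X)) :=
    inferInstanceAs (IsScalarTower R (R ⧸ 𝔪) (X ⧸ (𝔪 • ⊤ : Submodule R X)))
  obtain ⟨f, hf⟩ := Module.Projective.exists_dual_eq_one (ResidueField R)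
    (x := (mkQ _ z : X ⧸ (𝔪 • ⊤ : Submodule R X))) (by rwa [Ne, mkQ_apply, Quotient.mk_eq_zero])
  exact ⟨f.restrictScalars R ∘ₗ mkQ _, hf⟩

theorem residueFieldIsSummand_of_apply_eq_one {z : X}
    (hz : z ∈ torsionBySet R X (𝔪 : Set R)) {g : X →ₗ[R] ResidueField R} (hg : g z = 1) :
    ResidueFieldIsSummand R X := by
  let j : ResidueField R →ₗ[R] X := (𝔪).liftQ (LinearMap.toSpanSingleton R X z) fun a ha => by
    simpa using (mem_torsionBySet_iff _ _).mp hz ⟨a, ha⟩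
  have hgj : ∀ c, g (j c) = c := by
    intro c
    obtain ⟨r, rfl⟩ := residue_surjective c
    change g (r • z) = _
    rw [map_smul, hg, Algebra.smul_def, mul_one, ResidueField.algebraMap_eq]
  have hj : Function.Injective j := Function.LeftInverse.injective hgj
  refine ⟨LinearMap.range j, LinearMap.ker (j.rangeRestrict ∘ₗ g),
    LinearMap.isCompl_of_proj ?_, ⟨(LinearEquiv.ofInjective j hj).symm⟩⟩
  rintro ⟨_, c, rfl⟩
  exact Subtype.ext (congrArg j (hgj c))

theorem exists_apply_eq_one_of_residueFieldIsSummand (h : ResidueFieldIsSummand R X) :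
    ∃ z ∈ torsionBySet R X (𝔪 : Set R), ∃ g : X →ₗ[R] ResidueField R, g z = 1 := by
  obtain ⟨p, q, hpq, ⟨e⟩⟩ := h
  refine ⟨e.symm 1, (mem_torsionBySet_iff _ _).mpr fun ⟨a, ha⟩ => ?_,
    e ∘ₗ p.projectionOnto q hpq, by simp [projectionOnto_apply_left]⟩
  have : a • (1 : ResidueField R) = 0 := by
    rw [Algebra.smul_def, mul_one, ResidueField.algebraMap_eq, residue_eq_zero_iff]
    exact ha
  simpa using congrArg (fun c => (e.symm c : X)) this

theorem residueFieldIsSummand_iff :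
    ResidueFieldIsSummand R X ↔
      ∃ z ∈ torsionBySet R X (𝔪 : Set R), z ∉ 𝔪 • (⊤ : Submodule R X) := by
  simp_rw [← exists_linearMap_residueField_eq_one_iff]
  exact ⟨exists_apply_eq_one_of_residueFieldIsSummand,
    fun ⟨_, hz, _, hg⟩ => residueFieldIsSummand_of_apply_eq_one hz hg⟩

theorem ResidueFieldIsSummand.of_linearEquiv (e : X ≃ₗ[R] Y) (h : ResidueFieldIsSummand R X) :
    ResidueFieldIsSummand R Y := by
  obtain ⟨p, q, hpq, ⟨f⟩⟩ := h
  exact ⟨p.map (e : X →ₗ[R] Y), q.map (e : X →ₗ[R] Y), hpq.map (orderIsoMapComap e),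
    ⟨(e.submoduleMap p).symm.trans f⟩⟩

theorem ResidueFieldIsSummand.nontrivial (h : ResidueFieldIsSummand R X) : Nontrivial X := by
  obtain ⟨z, -, hz⟩ := residueFieldIsSummand_iff.mp h
  exact nontrivial_of_ne z 0 fun h0 => hz (h0 ▸ zero_mem _)

end ResidueFieldSummand

section Syzygy

open scoped TensorProduct

variable {F X Y : Type u} [AddCommGroup F] [Module R F] [AddCommGroup X] [Module R X]
  [AddCommGroup Y] [Module R Y]

theorem IsMinimalFreeCover.linearEquiv_comp {π : F →ₗ[R] X} (hπ : IsMinimalFreeCover R π)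
    (e : X ≃ₗ[R] Y) : IsMinimalFreeCover R (e.toLinearMap ∘ₗ π) := by
  obtain ⟨hfree, hfin, hsurj, hker⟩ := hπ
  exact ⟨hfree, hfin, e.surjective.comp hsurj, by rwa [LinearEquiv.ker_comp]⟩

theorem IsSyzygy.of_linearEquiv : ∀ {n : ℕ} {M M' N : ModuleCat.{u} R},
    (M ≃ₗ[R] M') → IsSyzygy R n M' N → IsSyzygy R n M N
  | 0, _, _, _, e, ⟨f⟩ => ⟨f.trans e.symm⟩
  | _ + 1, _, _, _, e, ⟨F, π, hπ, h⟩ => ⟨F, e.symm.toLinearMap ∘ₗ π, hπ.linearEquiv_comp e.symm,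
      IsSyzygy.of_linearEquiv (LinearEquiv.ofEq _ _ (LinearEquiv.ker_comp _ _)) h⟩

theorem IsSyzygy.succ {n : ℕ} {M K N : ModuleCat.{u} R} (π : F →ₗ[R] M)
    (hπ : IsMinimalFreeCover R π) (e : LinearMap.ker π ≃ₗ[R] K) (h : IsSyzygy R n K N) :
    IsSyzygy R (n + 1) M N :=
  ⟨ModuleCat.of R F, π, hπ, h.of_linearEquiv e⟩

theorem exists_isMinimalFreeCover (X : Type u) [AddCommGroup X] [Module R X] [Module.Finite R X] :
    ∃ (n : ℕ) (π : (Fin n → R) →ₗ[R] X), IsMinimalFreeCover R π := by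
  let w := Module.finBasis (ResidueField R) (ResidueField R ⊗[R] X)
  obtain ⟨v, hv⟩ :=
    (TensorProduct.mk_surjective R X (ResidueField R) residue_surjective).comp_left w
  have hvw : ∀ i, (1 : ResidueField R) ⊗ₜ[R] v i = w i := congrFun hv
  refine ⟨_, Fintype.linearCombination R v, inferInstance, inferInstance, ?_, fun c hc => ?_⟩
  · rw [← LinearMap.range_eq_top, Fintype.range_linearCombination]
    exact IsLocalRing.span_eq_top_of_tmul_eq_basis v w hvw
  · have hcw : ∑ j, residue R (c j) • w j = 0 := by
      have := congrArg (TensorProduct.mk R (ResidueField R) X 1) hc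
      simpa [Fintype.linearCombination_apply, TensorProduct.tmul_sum, ← hvw,
        ← ResidueField.algebraMap_eq, algebraMap_smul] using this
    rw [(Pi.basisFun R _).mem_ideal_smul_top_iff]
    intro i
    simpa using Fintype.linearIndependent_iff.mp w.linearIndependent _ hcw i

theorem IsMinimalFreeCover.ker_eq_smul_top {π : F →ₗ[R] X} (hπ : IsMinimalFreeCover R π)
    (hX : Module.IsTorsionBySet R X (𝔪 : Set R)) : LinearMap.ker π = 𝔪 • ⊤ :=
  le_antisymm hπ.2.2.2 <| smul_le.mpr fun a ha y _ => by
    rw [LinearMap.mem_ker, map_smul]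
    exact @hX (π y) ⟨a, ha⟩

theorem IsMinimalFreeCover.nontrivial_ker {π : F →ₗ[R] X} (hπ : IsMinimalFreeCover R π)
    (hX : ¬ Module.Free R X) : Nontrivial (LinearMap.ker π) := by
  obtain ⟨hF, -, hsurj, -⟩ := hπ
  rw [Submodule.nontrivial_iff_ne_bot]
  exact fun h => hX (.of_equiv (LinearEquiv.ofBijective π ⟨LinearMap.ker_eq_bot.mp h, hsurj⟩))

/-- A section of the cover splits off the kernel, which then satisfies `ker π ≤ 𝔪 • ker π`. -/
theorem IsMinimalFreeCover.not_free [IsNoetherianRing R] {π : F →ₗ[R] X}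
    (hπ : IsMinimalFreeCover R π) (hker : LinearMap.ker π ≠ ⊥) : ¬ Module.Free R X := by
  intro hX
  obtain ⟨-, hFfin, hsurj, hkerle⟩ := hπ
  obtain ⟨σ, hσ⟩ := Module.projective_lifting_property π LinearMap.id hsurj
  let q := LinearMap.id - σ ∘ₗ π
  have hq : ∀ y ∈ LinearMap.ker π, q y = y := fun y hy => by
    simp [q, LinearMap.mem_ker.mp hy]
  have hrange : LinearMap.range q ≤ LinearMap.ker π := by
    rintro _ ⟨y, rfl⟩
    simp [q, ← LinearMap.comp_apply π σ, hσ]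
  have hsmul : (𝔪 • ⊤ : Submodule R F).map q ≤ 𝔪 • LinearMap.ker π := by
    rw [map_smul'', Submodule.map_top]
    exact smul_mono_right _ hrange
  refine hker (eq_bot_of_le_smul_of_le_jacobson_bot 𝔪 _ (IsNoetherian.noetherian _)
    (fun y hy => ?_) (maximalIdeal_le_jacobson ⊥))
  rw [← hq y hy]
  exact hsmul (mem_map_of_mem (hkerle hy))

theorem isMinimalFreeCover_mkQ [Module.Free R F] [Module.Finite R F] {P : Submodule R F}
    (hP : P ≤ 𝔪 • ⊤) : IsMinimalFreeCover R P.mkQ :=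
  ⟨inferInstance, inferInstance, P.mkQ_surjective, by rwa [ker_mkQ]⟩

theorem not_free_quotient [IsNoetherianRing R] [Module.Free R F] [Module.Finite R F]
    {P : Submodule R F} (hP : P ≤ 𝔪 • ⊤) (hP0 : P ≠ ⊥) : ¬ Module.Free R (F ⧸ P) :=
  (isMinimalFreeCover_mkQ hP).not_free (by rwa [ker_mkQ])

theorem IsSyzygy.mkQ [Module.Free R F] [Module.Finite R F] {n : ℕ} {P : Submodule R F}
    {N : ModuleCat.{u} R} (hP : P ≤ 𝔪 • ⊤) (h : IsSyzygy R n (ModuleCat.of R P) N) :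
    IsSyzygy R (n + 1) (ModuleCat.of R (F ⧸ P)) N :=
  .succ P.mkQ (isMinimalFreeCover_mkQ hP) (LinearEquiv.ofEq _ _ (ker_mkQ P)) h

theorem isMinimalFreeCover_rangeRestrict [Module.Free R F] [Module.Finite R F] (f : F →ₗ[R] X)
    (hf : LinearMap.ker f ≤ 𝔪 • ⊤) : IsMinimalFreeCover R f.rangeRestrict :=
  ⟨inferInstance, inferInstance, f.surjective_rangeRestrict, by rwa [LinearMap.ker_rangeRestrict]⟩

theorem exists_isSyzygy_submodule [IsNoetherianRing R] (n : ℕ) (M : ModuleCat.{u} R)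
    [Module.Finite R M] :
    ∃ (d : ℕ) (L : Submodule R (Fin d → R)), IsSyzygy R (n + 1) M (ModuleCat.of R L) := by
  induction n generalizing M with
  | zero =>
    obtain ⟨d, π, hπ⟩ := exists_isMinimalFreeCover (R := R) M
    exact ⟨d, LinearMap.ker π, .succ π hπ (.refl R _) ⟨.refl R _⟩⟩
  | succ n ih =>
    obtain ⟨d, π, hπ⟩ := exists_isMinimalFreeCover (R := R) M
    obtain ⟨d', L, hL⟩ := ih (ModuleCat.of R (LinearMap.ker π))
    exact ⟨d', L, .succ π hπ (.refl R _) hL⟩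

end Syzygy

section Socle

variable {F X : Type u} [AddCommGroup F] [Module R F] [AddCommGroup X] [Module R X]

theorem torsionBySet_maximalIdeal_le (hR : ¬ IsField R) :
    soc ≤ 𝔪 := by
  intro z hz
  by_contra hzm
  refine hR (isField_iff_maximalIdeal_eq.mpr (eq_bot_iff.mpr fun a ha => ?_))
  exact (notMem_maximalIdeal.mp hzm).mul_left_eq_zero.mp
    ((mem_torsionBySet_iff _ _).mp hz ⟨a, ha⟩)

theorem torsionBySet_maximalIdeal_le_smul_top (hR : ¬ IsField R) :
    soc ≤ 𝔪 • (⊤ : Submodule R R) := by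
  rw [Ideal.smul_eq_mul, Ideal.mul_top]
  exact torsionBySet_maximalIdeal_le hR

theorem residueFieldIsSummand_maximalIdeal_iff (hR : ¬ IsField R) :
    ResidueFieldIsSummand R 𝔪 ↔ ¬ soc ≤ 𝔪 ^ 2 := by
  rw [residueFieldIsSummand_iff, SetLike.not_le_iff_exists]
  constructor
  · rintro ⟨z, hz, hz'⟩
    refine ⟨z, coe_mem_torsionBySet_iff.mpr hz, fun h => hz' ?_⟩
    rwa [mem_smul_top_iff, smul_eq_mul, ← sq]
  · rintro ⟨x, hx, hx2⟩
    refine ⟨⟨x, torsionBySet_maximalIdeal_le hR hx⟩, coe_mem_torsionBySet_iff.mp hx,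
      fun h => hx2 ?_⟩
    rwa [mem_smul_top_iff, smul_eq_mul, ← sq] at h

theorem IsMinimalFreeCover.smul_ker_eq_zero {x : R} (hx : x ∈ soc)
    {π : F →ₗ[R] X} (hπ : IsMinimalFreeCover R π) (y : LinearMap.ker π) : x • y = 0 :=
  Subtype.ext (smul_eq_zero_of_mem_torsionBySet_of_mem_smul hx (hπ.2.2.2 y.2))

theorem IsMinimalFreeCover.residueFieldIsSummand_ker {x : R}
    (hx : x ∈ soc) (hx2 : x ∉ 𝔪 ^ 2) {π : F →ₗ[R] X}
    (hπ : IsMinimalFreeCover R π) [Nontrivial X] (hX : ∀ y : X, x • y = 0) :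
    ResidueFieldIsSummand R (LinearMap.ker π) := by
  obtain ⟨hF, -, hsurj, hker⟩ := hπ
  have : Nontrivial F := hsurj.nontrivial
  let b := Module.Free.chooseBasis R F
  obtain ⟨i⟩ := b.index_nonempty
  have hmem : x • b i ∈ LinearMap.ker π := by rw [LinearMap.mem_ker, map_smul, hX]
  refine residueFieldIsSummand_iff.mpr ⟨⟨x • b i, hmem⟩, ?_, fun h => hx2 ?_⟩
  · rw [← coe_mem_torsionBySet_iff, mem_torsionBySet_iff]
    rintro ⟨a, ha⟩
    rw [coe_mk, smul_smul, ← smul_eq_mul, (mem_torsionBySet_iff _ _).mp hx ⟨a, ha⟩, zero_smul]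
  · have : x • b i ∈ (𝔪 ^ 2) • (⊤ : Submodule R F) := by
      rw [sq, Submodule.mul_smul]
      exact smul_mono_right _ hker ((mem_smul_top_iff _ _ _).mp h)
    simpa using b.mem_ideal_smul_top_iff.mp this i

theorem residueFieldIsSummand_of_isSyzygy_one {x : R} (hx : x ∈ soc)
    (hx2 : x ∉ 𝔪 ^ 2) {K N : ModuleCat.{u} R} [Nontrivial K] (hK : ∀ y : K, x • y = 0)
    (h : IsSyzygy R 1 K N) : ResidueFieldIsSummand R N := by
  obtain ⟨F, π, hπ, ⟨e⟩⟩ := h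
  exact (hπ.residueFieldIsSummand_ker hx hx2 hK).of_linearEquiv e.symm

theorem not_residueFieldIsSummand_smul_top [Module.Free R F]
    (hP : soc ≤ 𝔪 ^ 2) :
    ¬ ResidueFieldIsSummand R (𝔪 • ⊤ : Submodule R F) := by
  rw [residueFieldIsSummand_iff]
  rintro ⟨z, hz, hz'⟩
  let b := Module.Free.chooseBasis R F
  apply hz'
  rw [mem_smul_top_iff, ← Submodule.mul_smul, ← sq, b.mem_ideal_smul_top_iff]
  exact fun i => hP (b.repr_mem_torsionBySet (coe_mem_torsionBySet_iff.mpr hz) i)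

theorem not_residueFieldIsSummand_of_torsionBySet_eq_bot [Module.Free R F]
    (hsoc : soc = ⊥) (L : Submodule R F) :
    ¬ ResidueFieldIsSummand R L := by
  rw [residueFieldIsSummand_iff]
  rintro ⟨z, hz, hz'⟩
  let b := Module.Free.chooseBasis R F
  have hz0 : z = 0 := by
    refine Subtype.ext (b.repr.injective (Finsupp.ext fun i => ?_))
    simpa [hsoc] using b.repr_mem_torsionBySet (coe_mem_torsionBySet_iff.mpr hz) i
  exact hz' (hz0 ▸ zero_mem _)

theorem not_residueFieldIsSummand_of_isSyzygy_one
    (hP : soc ≤ 𝔪 ^ 2) {K N : ModuleCat.{u} R}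
    (hK : Module.IsTorsionBySet R K (𝔪 : Set R)) (h : IsSyzygy R 1 K N) :
    ¬ ResidueFieldIsSummand R N := by
  obtain ⟨F, π, hπ, ⟨e⟩⟩ := h
  have := hπ.1
  exact fun hN => not_residueFieldIsSummand_smul_top hP
    ((hN.of_linearEquiv e).of_linearEquiv (LinearEquiv.ofEq _ _ (hπ.ker_eq_smul_top hK)))

end Socle

section Counterexamples

variable [IsNoetherianRing R]

theorem exists_isSyzygy_not_residueFieldIsSummand_of_torsionBySet_eq_bot (hR : ¬ IsField R)
    (hsoc : soc = ⊥) (n : ℕ) :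
    ∃ M N : ModuleCat.{u} R, Module.Finite R M ∧ ¬ Module.Free R M ∧
      IsSyzygy R (n + 1) M N ∧ ¬ ResidueFieldIsSummand R N := by
  obtain ⟨d, L, hL⟩ := exists_isSyzygy_submodule n (ModuleCat.of R (R ⧸ 𝔪))
  refine ⟨_, _, inferInstance, not_free_quotient ?_ ?_, hL,
    not_residueFieldIsSummand_of_torsionBySet_eq_bot hsoc L⟩
  · rw [Ideal.smul_eq_mul, Ideal.mul_top]
  · exact fun h => hR (isField_iff_maximalIdeal_eq.mpr h)

theorem exists_isSyzygy_one_torsionBySet_not_residueFieldIsSummand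
    (hP : soc ≤ 𝔪 ^ 2) :
    ∃ N : ModuleCat.{u} R, IsSyzygy R 1 (ModuleCat.of R soc) N ∧
      ¬ ResidueFieldIsSummand R N := by
  obtain ⟨d, π, hπ⟩ := exists_isMinimalFreeCover (R := R) soc
  have hN : IsSyzygy R 1 (ModuleCat.of R soc)
      (ModuleCat.of R (LinearMap.ker π)) := .succ π hπ (.refl R _) ⟨.refl R _⟩
  exact ⟨_, hN, not_residueFieldIsSummand_of_isSyzygy_one hP (torsionBySet_isTorsionBySet _) hN⟩

theorem exists_isSyzygy_two_not_residueFieldIsSummand (hR : ¬ IsField R)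
    (hP : soc ≤ 𝔪 ^ 2) :
    ∃ M N : ModuleCat.{u} R, Module.Finite R M ∧ ¬ Module.Free R M ∧
      IsSyzygy R 2 M N ∧ ¬ ResidueFieldIsSummand R N := by
  by_cases hsoc : soc = ⊥
  · exact exists_isSyzygy_not_residueFieldIsSummand_of_torsionBySet_eq_bot hR hsoc 1
  obtain ⟨N, hN, hNk⟩ := exists_isSyzygy_one_torsionBySet_not_residueFieldIsSummand hP
  have hle := torsionBySet_maximalIdeal_le_smul_top hR
  exact ⟨_, N, inferInstance, not_free_quotient hle hsoc, hN.mkQ hle, hNk⟩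

/-- With `a` generating `𝔪`, the map `r ↦ r • a` has kernel `soc R`, so
`Ω³(Rⁿ ⧸ R a) = Ω²(R a) = Ω¹(soc R)`. -/
theorem exists_isSyzygy_three_not_residueFieldIsSummand (hR : ¬ IsField R)
    (hP : soc ≤ 𝔪 ^ 2) :
    ∃ M N : ModuleCat.{u} R, Module.Finite R M ∧ ¬ Module.Free R M ∧
      IsSyzygy R 3 M N ∧ ¬ ResidueFieldIsSummand R N := by
  by_cases hsoc : soc = ⊥
  · exact exists_isSyzygy_not_residueFieldIsSummand_of_torsionBySet_eq_bot hR hsoc 2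
  obtain ⟨N, hN, hNk⟩ := exists_isSyzygy_one_torsionBySet_not_residueFieldIsSummand hP
  obtain ⟨n, a, ha⟩ := Submodule.fg_iff_exists_fin_generating_family.mp
    (maximalIdeal R).fg_of_isNoetherianRing
  let A := LinearMap.toSpanSingleton R (Fin n → R) a
  have hA : LinearMap.ker A = soc := by
    rw [LinearMap.ker_toSpanSingleton_pi, ← ha]
  have hkerA : LinearMap.ker A ≤ 𝔪 • ⊤ := hA ▸ torsionBySet_maximalIdeal_le_smul_top hR
  have hrange : LinearMap.range A ≤ 𝔪 • ⊤ := by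
    rintro _ ⟨r, rfl⟩
    refine smul_mem _ r ((Pi.basisFun R (Fin n)).mem_ideal_smul_top_iff.mpr fun i => ?_)
    simpa [← ha] using subset_span (Set.mem_range_self i)
  have hrange0 : LinearMap.range A ≠ ⊥ := fun h => Ideal.one_notMem 𝔪 <|
    torsionBySet_maximalIdeal_le hR <|
      hA ▸ (LinearMap.congr_fun (LinearMap.range_eq_bot.mp h) 1 : (1 : R) ∈ LinearMap.ker A)
  exact ⟨_, N, inferInstance, not_free_quotient hrange hrange0,
    (IsSyzygy.succ A.rangeRestrict (isMinimalFreeCover_rangeRestrict A hkerA)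
      (LinearEquiv.ofEq _ _ (LinearMap.ker_rangeRestrict A |>.trans hA)) hN).mkQ hrange, hNk⟩

end Counterexamples

end LocalRing

theorem stmt1 (R : Type u) [CommRing R] [IsNoetherianRing R] [IsLocalRing R]
    (hR : ¬ IsField R) :
    List.TFAE
      [∀ M : ModuleCat.{u} R, Module.Finite R M → ¬ Module.Free R M →
          ∀ N : ModuleCat.{u} R, IsSyzygy R 2 M N → ResidueFieldIsSummand R N,
        ∀ M : ModuleCat.{u} R, Module.Finite R M → ¬ Module.Free R M →
          ∀ N : ModuleCat.{u} R, IsSyzygy R 3 M N → ResidueFieldIsSummand R N,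
        ResidueFieldIsSummand R (maximalIdeal R),
        ¬ Submodule.torsionBySet R R (maximalIdeal R : Set R) ≤ (maximalIdeal R) ^ 2] := by
  tfae_have 3 ↔ 4 := residueFieldIsSummand_maximalIdeal_iff hR
  tfae_have 4 → 1 := by
    rintro h4 M - hM N ⟨F, π, hπ, hN⟩
    obtain ⟨x, hx, hx2⟩ := SetLike.not_le_iff_exists.mp h4
    have := hπ.nontrivial_ker hM
    exact residueFieldIsSummand_of_isSyzygy_one hx hx2 (hπ.smul_ker_eq_zero hx) hN
  tfae_have 4 → 2 := by
    rintro h4 M - hM N ⟨F, π, hπ, G, ρ, hρ, hN⟩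
    obtain ⟨x, hx, hx2⟩ := SetLike.not_le_iff_exists.mp h4
    have := hπ.nontrivial_ker hM
    have := (hρ.residueFieldIsSummand_ker hx hx2 (hπ.smul_ker_eq_zero hx)).nontrivial
    exact residueFieldIsSummand_of_isSyzygy_one hx hx2 (hρ.smul_ker_eq_zero hx) hN
  tfae_have 1 → 4 := fun h1 hP => by
    obtain ⟨M, N, hMf, hM, hN, hNk⟩ := exists_isSyzygy_two_not_residueFieldIsSummand hR hP
    exact hNk (h1 M hMf hM N hN)
  tfae_have 2 → 4 := fun h2 hP => by
    obtain ⟨M, N, hMf, hM, hN, hNk⟩ := exists_isSyzygy_three_not_residueFieldIsSummand hR hP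
    exact hNk (h2 M hMf hM N hN)
  tfae_finish
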